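/- Any two edges of the Petersen graph at distance exactly 3 belong to exactly one maximum induced matching of size 3. -/

import Mathlib

open SimpleGraph

/-- Two edges (as elements of `Sym2 V`) are adjacent: distinct and sharing an endvertex. -/
def EdgeAdj {V : Type*} (e f : Sym2 V) : Prop := e ≠ f ∧ ∃ v, v ∈ e ∧ v ∈ f

/-- Two edges are at distance at most 2 in `G`: adjacent, or both adjacent to a common edge. -/
def DistLE2 {V : Type*} (G : SimpleGraph V) (e f : Sym2 V) : Prop :=
  EdgeAdj e f ∨ ∃ g ∈ G.edgeSet, EdgeAdj e g ∧ EdgeAdj g f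

/-- A strong edge-coloring: any two distinct edges at distance at most 2 get distinct colors. -/
def IsStrongEdgeColoring {V : Type*} (G : SimpleGraph V) {C : Type*} (φ : Sym2 V → C) : Prop :=
  ∀ e ∈ G.edgeSet, ∀ f ∈ G.edgeSet, DistLE2 G e f → φ e ≠ φ f

/-- Vertices of the Kneser graph K(5,2): 2-element subsets of a 5-element set. -/
abbrev PV := {s : Finset (Fin 5) // s.card = 2}

/-- The Petersen graph as the Kneser graph K(5,2): adjacency is disjointness. -/
def petersen : SimpleGraph PV where
  Adj a b := Disjoint a.1 b.1
  symm := ⟨fun _ _ h => h.symm⟩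
  loopless := by
    constructor
    intro a h
    rw [disjoint_self] at h
    have h2 := a.2
    simp [h, Finset.bot_eq_empty] at h2

/-- An induced matching: a set of edges of `G` pairwise at distance at least 3. -/
def IsInducedMatching {V : Type*} (G : SimpleGraph V) (M : Set (Sym2 V)) : Prop :=
  M ⊆ G.edgeSet ∧ ∀ e ∈ M, ∀ f ∈ M, e ≠ f → ¬ DistLE2 G e f

/-- Two edges are at distance at most 3. -/
def DistLE3 {V : Type*} (G : SimpleGraph V) (e f : Sym2 V) : Prop :=
  DistLE2 G e f ∨ ∃ g ∈ G.edgeSet, ∃ h ∈ G.edgeSet, EdgeAdj e g ∧ EdgeAdj g h ∧ EdgeAdj h f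

lemma edgeAdj_symm {V : Type*} {e f : Sym2 V} (h : EdgeAdj e f) : EdgeAdj f e :=
  ⟨h.1.symm, h.2.imp fun _ hv => ⟨hv.2, hv.1⟩⟩

lemma distLE2_symm {V : Type*} {G : SimpleGraph V} {e f : Sym2 V}
    (h : DistLE2 G e f) : DistLE2 G f e := by
  rcases h with h | ⟨g, hg, h1, h2⟩
  · exact Or.inl (edgeAdj_symm h)
  · exact Or.inr ⟨g, hg, edgeAdj_symm h2, edgeAdj_symm h1⟩

instance : DecidableRel petersen.Adj := fun a b => by unfold petersen; infer_instance
instance (e f : Sym2 PV) : Decidable (EdgeAdj e f) := by unfold EdgeAdj; infer_instance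
instance (e f : Sym2 PV) : Decidable (DistLE2 petersen e f) := by unfold DistLE2; infer_instance

lemma petersen_d2_refl : ∀ e ∈ petersen.edgeSet, DistLE2 petersen e e := by decide

set_option maxRecDepth 100000 in
lemma petersen_key : ∀ e ∈ petersen.edgeSet, ∀ f ∈ petersen.edgeSet,
    ¬ DistLE2 petersen e f →
    ∃ g, (g ∈ petersen.edgeSet ∧ ¬ DistLE2 petersen e g ∧ ¬ DistLE2 petersen f g) ∧
      ∀ g', (g' ∈ petersen.edgeSet ∧ ¬ DistLE2 petersen e g' ∧ ¬ DistLE2 petersen f g') →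
        g' = g := by
  decide

/-- Any two edges of the Petersen graph at distance exactly 3 belong to exactly one
maximum induced matching of size 3. -/
theorem petersen_dist_three_unique_matching :
    ∀ e ∈ petersen.edgeSet, ∀ f ∈ petersen.edgeSet,
      DistLE3 petersen e f → ¬ DistLE2 petersen e f →
      ∃! M : Set (Sym2 PV), IsInducedMatching petersen M ∧ M.ncard = 3 ∧ e ∈ M ∧ f ∈ M := by
  intro e he f hf _ hnd2
  have hef : e ≠ f := by
    rintro rfl; exact hnd2 (petersen_d2_refl e he)
  obtain ⟨g, ⟨hgE, hneg, hnfg⟩, hu⟩ := petersen_key e he f hf hnd2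
  have hge : g ≠ e := by rintro rfl; exact hneg (distLE2_symm (petersen_d2_refl g hgE))
  have hgf : g ≠ f := by rintro rfl; exact hnfg (distLE2_symm (petersen_d2_refl g hgE))
  refine ⟨{e, f, g}, ⟨⟨?_, ?_⟩, ?_, by simp, by simp⟩, ?_⟩
  · intro x hx
    rcases hx with rfl | rfl | rfl
    exacts [he, hf, hgE]
  · intro x hx y hy hxy
    rcases hx with rfl | rfl | rfl <;> rcases hy with rfl | rfl | rfl <;>
      first
        | exact absurd rfl hxy
        | exact hnd2
        | exact fun h => hnd2 (distLE2_symm h)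
        | exact hneg
        | exact fun h => hneg (distLE2_symm h)
        | exact hnfg
        | exact fun h => hnfg (distLE2_symm h)
  · rw [Set.ncard_insert_of_notMem (by simp [hef, hge.symm]),
      Set.ncard_insert_of_notMem (by simp [hgf.symm]), Set.ncard_singleton]
  · rintro M ⟨⟨hsub, hpair⟩, hcard, heM, hfM⟩
    -- extract the third element
    have hfin : M.Finite := Set.toFinite M
    letI : Fintype ↑M := hfin.fintype
    have hcard' : M.toFinset.card = 3 := by
      rw [← Set.ncard_eq_toFinset_card']; exact hcard
    have heMt : e ∈ M.toFinset := Set.mem_toFinset.2 heM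
    have hfMt : f ∈ M.toFinset := Set.mem_toFinset.2 hfM
    have h1 : ((M.toFinset.erase e).erase f).card = 1 := by
      rw [Finset.card_erase_of_mem (Finset.mem_erase.2 ⟨hef.symm, hfMt⟩),
        Finset.card_erase_of_mem heMt, hcard']
    obtain ⟨g', hg'⟩ := Finset.card_eq_one.1 h1
    have hg'mem : g' ∈ (M.toFinset.erase e).erase f := by simp [hg']
    have hg'f : g' ≠ f := (Finset.mem_erase.1 hg'mem).1
    have hg'e : g' ≠ e := (Finset.mem_erase.1 (Finset.mem_erase.1 hg'mem).2).1
    have hg'M : g' ∈ M := Set.mem_toFinset.1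
      (Finset.mem_of_mem_erase (Finset.mem_of_mem_erase hg'mem))
    have hsubset : ({e, f, g'} : Finset (Sym2 PV)) ⊆ M.toFinset := by
      intro x hx
      rcases Finset.mem_insert.1 hx with rfl | hx
      · exact heMt
      rcases Finset.mem_insert.1 hx with rfl | hx
      · exact hfMt
      · rw [Finset.mem_singleton.1 hx]; exact Set.mem_toFinset.2 hg'M
    have hc3 : ({e, f, g'} : Finset (Sym2 PV)).card = 3 := by
      rw [Finset.card_insert_of_notMem (by simp [hef, hg'e.symm]),
        Finset.card_insert_of_notMem (by simp [hg'f.symm]), Finset.card_singleton]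
    have hMt : M.toFinset = {e, f, g'} :=
      (Finset.eq_of_subset_of_card_le hsubset (by rw [hcard', hc3])).symm
    have hMeq : M = {e, f, g'} := by
      rw [← Set.coe_toFinset M, hMt]; simp
    have : g' = g := hu g' ⟨hsub hg'M,
      hpair e heM g' hg'M (Ne.symm hg'e), hpair f hfM g' hg'M (Ne.symm hg'f)⟩
    rw [hMeq, this]
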